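/- Assume m_c < m < 1 where m_c := max(0,(d-2)/d). Set γ₀ := 2/(1-m), 𝖰(γ) := ∫_0^1 Q(σ)·σ^{γ-3} dσ, c* := 𝖰(γ₀)^{-1/(1-m)}, and let γ* > 0 satisfy 𝖰(γ₀+γ*) = m·𝖰(γ₀). Then for every A ∈ ℝ, the function Ū(z) := c*·z^{-γ₀}·max(0, 1 - A·z^{-γ*}) is a subsolution: for every z > 0, Ū(z)^m ≤ ∫_z^∞ K(z,ρ)·Ū(ρ) dρ. -/

import Mathlib

open MeasureTheory Set Filter

/-!
Write `γ₀ = 2/(1-m)` and `γ₁ = γ₀ + γ*`. The substitution `ρ = z/σ` turns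
`∫_z^∞ K(z,ρ) ρ^{-γ} dρ` into `z^{2-γ} 𝖰(γ)`; these moments are finite and positive for
`γ > max 2 d`, because `Q(σ) = O(σ^{-β})` for every `β > max 0 (d-2)`. Bounding
`max 0 (1 - A ρ^{-γ*})` below by `1 - A ρ^{-γ*}` and using `𝖰(γ₁) = m 𝖰(γ₀)`, the right-hand
side is at least `c* z^{2-γ₀} 𝖰(γ₀) (1 - m A z^{-γ*})`. On the left,
`(c* z^{-γ₀})^m = c* z^{2-γ₀} 𝖰(γ₀)` (the very singular solution), and
`max 0 (1 - x) ^ m ≤ max 0 (1 - m x)` by concavity of `t ↦ t^m`.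
-/

/-- The kernel profile `Q(η) = (1/Γ(1-α)) ∫_η^1 (1-σ^{1/b})^{-α} σ^{1-d} dσ` for
`η ∈ (0,1)`; for `η ≥ 1` the interval `(η,1)` is empty, so `Q(η) = 0`. -/
noncomputable def Qker (d : ℕ) (α b : ℝ) (η : ℝ) : ℝ :=
  (1 / Real.Gamma (1 - α)) *
    ∫ σ in Set.Ioo η 1, (1 - σ ^ (1 / b)) ^ (-α) * σ ^ (1 - (d:ℝ))

/-- The kernel `K(z,ρ) = ρ·Q(z/ρ)`. -/
noncomputable def Kker (d : ℕ) (α b : ℝ) (z ρ : ℝ) : ℝ := ρ * Qker d α b (z / ρ)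

/-- The moment `𝖰(γ) = ∫_0^1 Q(σ)·σ^{γ-3} dσ`. -/
noncomputable def Qmoment (d : ℕ) (α b : ℝ) (γ : ℝ) : ℝ :=
  ∫ σ in Set.Ioo (0:ℝ) 1, Qker d α b σ * σ ^ (γ - 3)

lemma max_zero_one_sub_rpow_le {m x : ℝ} (hm0 : 0 < m) (hm1 : m ≤ 1) :
    max 0 (1 - x) ^ m ≤ max 0 (1 - m * x) := by
  rcases le_total (1 - x) 0 with h | h
  · rw [max_eq_left h, Real.zero_rpow hm0.ne']
    exact le_max_left _ _
  · rw [max_eq_right h]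
    have := rpow_one_add_le_one_add_mul_self (s := -x) (by linarith) hm0.le hm1
    rw [← sub_eq_add_neg, mul_neg, ← sub_eq_add_neg] at this
    exact this.trans (le_max_right _ _)

lemma min_one_mul_one_sub_le_one_sub_rpow {t p : ℝ} (ht0 : 0 ≤ t) (ht1 : t ≤ 1) (hp : 0 < p) :
    min 1 p * (1 - t) ≤ 1 - t ^ p := by
  rcases le_or_gt p 1 with hp1 | hp1
  · have := rpow_one_add_le_one_add_mul_self (s := t - 1) (by linarith) hp.le hp1
    rw [min_eq_right hp1]
    simp only [add_sub_cancel] at this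
    linarith
  · rw [min_eq_left hp1.le, one_mul]
    linarith [Real.rpow_le_self_of_le_one ht0 ht1 hp1.le]

lemma rpow_le_rpow_neg_mul_rpow_add {σ t β : ℝ} (δ : ℝ) (hσ : 0 < σ) (hσt : σ ≤ t)
    (hβ : 0 ≤ β) : t ^ δ ≤ σ ^ (-β) * t ^ (δ + β) := by
  have ht : 0 < t := hσ.trans_le hσt
  calc t ^ δ = t ^ (-β) * t ^ (δ + β) := by rw [← Real.rpow_add ht]; ring_nf
    _ ≤ σ ^ (-β) * t ^ (δ + β) := by
      have := Real.rpow_le_rpow_of_nonpos hσ hσt (neg_nonpos.2 hβ)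
      gcongr

lemma mul_one_sub_lt_two_of_max_lt {d : ℕ} {m : ℝ} (h : max 0 (((d:ℝ) - 2) / d) < m) :
    (d:ℝ) * (1 - m) < 2 := by
  rcases Nat.eq_zero_or_pos d with rfl | hd
  · norm_num
  · have hd' : (0:ℝ) < d := by exact_mod_cast hd
    have := (le_max_right _ _).trans_lt h
    rw [div_lt_iff₀ hd'] at this
    linarith

lemma verySingular_rpow_eq {Q z m : ℝ} (hQ : 0 < Q) (hz : 0 < z) (hm : m < 1) :
    (Q ^ (-(1 / (1 - m))) * z ^ (-(2 / (1 - m)))) ^ m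
      = Q ^ (-(1 / (1 - m))) * (z ^ (2 - 2 / (1 - m)) * Q) := by
  have h1m : 1 - m ≠ 0 := by linarith
  rw [Real.mul_rpow (by positivity) (by positivity), ← Real.rpow_mul hQ.le,
    ← Real.rpow_mul hz.le, show -(1 / (1 - m)) * m = -(1 / (1 - m)) + 1 by field_simp; ring,
    show -(2 / (1 - m)) * m = 2 - 2 / (1 - m) by field_simp; ring, Real.rpow_add hQ,
    Real.rpow_one]
  ring

lemma integrableOn_rpow_mul_one_sub_rpow {a c : ℝ} (ha : -1 < a) (hc : -1 < c) :
    IntegrableOn (fun t : ℝ => t ^ a * (1 - t) ^ c) (Ioo 0 1) := by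
  have h := (Complex.betaIntegral_convergent (u := a + 1) (v := c + 1)
    (by simp; linarith) (by simp; linarith)).norm
  rw [intervalIntegrable_iff_integrableOn_Ioo_of_le zero_le_one] at h
  refine h.congr_fun (fun t ht => ?_) measurableSet_Ioo
  have h1 : (1 - (t : ℂ)) = ((1 - t : ℝ) : ℂ) := by push_cast; rfl
  simp only [norm_mul, h1, Complex.norm_cpow_eq_rpow_re_of_pos ht.1,
    Complex.norm_cpow_eq_rpow_re_of_pos (sub_pos.2 ht.2)]
  simp

lemma setIntegral_Ioo_pos {f : ℝ → ℝ} {a b : ℝ} (hab : a < b) (hf : IntegrableOn f (Ioo a b))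
    (hpos : ∀ x ∈ Ioo a b, 0 < f x) : 0 < ∫ x in Ioo a b, f x := by
  rw [setIntegral_pos_iff_support_of_nonneg_ae
    (ae_restrict_of_forall_mem measurableSet_Ioo fun x hx => (hpos x hx).le) hf]
  calc (0 : ENNReal) < volume (Ioo a b) := by simpa using hab
    _ ≤ _ := measure_mono fun x hx => show x ∈ Function.support f ∩ Ioo a b from
      ⟨(hpos x hx).ne', hx⟩

lemma setIntegral_sub_mul_le_setIntegral_mul_max_zero {X : Type*} [MeasurableSpace X]
    {μ : Measure X} {s : Set X} {f w : X → ℝ} (hs : MeasurableSet s) (hf : IntegrableOn f s μ)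
    (hfw : IntegrableOn (fun x => f x * w x) s μ) (hw : AEStronglyMeasurable w (μ.restrict s))
    (hf0 : ∀ x ∈ s, 0 ≤ f x) (A : ℝ) :
    ∫ x in s, f x - A * (f x * w x) ∂μ ≤ ∫ x in s, f x * max 0 (1 - A * w x) ∂μ := by
  have hlow : IntegrableOn (fun x => f x - A * (f x * w x)) s μ := hf.sub (hfw.const_mul A)
  have hfactor : ∀ x, f x - A * (f x * w x) = f x * (1 - A * w x) := fun x => by ring
  refine setIntegral_mono_on hlow ?_ hs fun x hx => ?_
  · refine Integrable.mono hlow (hf.aestronglyMeasurable.mul ?_) ?_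
    · exact (continuous_const.max continuous_id).comp_aestronglyMeasurable
        (aestronglyMeasurable_const.sub (hw.const_mul A))
    · filter_upwards [ae_restrict_mem hs] with x hx
      rw [hfactor, norm_mul, norm_mul]
      gcongr
      rw [Real.norm_of_nonneg (le_max_left _ _)]
      exact max_le (norm_nonneg _) (Real.le_norm_self _)
  · rw [hfactor]
    exact mul_le_mul_of_nonneg_left (le_max_right _ _) (hf0 x hx)

section ProfileIntegrand

variable {p α δ : ℝ}

lemma one_sub_rpow_rpow_neg_mul_rpow_nonneg (hp : 0 ≤ p) {t : ℝ} (ht0 : 0 ≤ t) (ht1 : t ≤ 1) :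
    0 ≤ (1 - t ^ p) ^ (-α) * t ^ δ := by
  have : t ^ p ≤ 1 := Real.rpow_le_one ht0 ht1 hp
  exact mul_nonneg (Real.rpow_nonneg (by linarith) _) (Real.rpow_nonneg ht0 _)

lemma one_sub_rpow_rpow_neg_mul_rpow_pos (hp : 0 < p) {t : ℝ} (ht0 : 0 < t) (ht1 : t < 1) :
    0 < (1 - t ^ p) ^ (-α) * t ^ δ := by
  have : t ^ p < 1 := Real.rpow_lt_one ht0.le ht1 hp
  exact mul_pos (Real.rpow_pos_of_pos (by linarith) _) (Real.rpow_pos_of_pos ht0 _)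

lemma integrableOn_one_sub_rpow_rpow_neg_mul_rpow (hp : 0 < p) (hα0 : 0 ≤ α) (hα1 : α < 1)
    (hδ : -1 < δ) : IntegrableOn (fun t : ℝ => (1 - t ^ p) ^ (-α) * t ^ δ) (Ioo 0 1) := by
  have hc : 0 < min 1 p := lt_min one_pos hp
  refine ((integrableOn_rpow_mul_one_sub_rpow hδ (by linarith : -1 < -α)).const_mul
    (min 1 p ^ (-α))).mono' (by fun_prop) ?_
  filter_upwards [ae_restrict_mem measurableSet_Ioo] with t ⟨ht0, ht1⟩
  rw [Real.norm_of_nonneg (one_sub_rpow_rpow_neg_mul_rpow_nonneg hp.le ht0.le ht1.le)]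
  have hle : (1 - t ^ p) ^ (-α) ≤ (min 1 p * (1 - t)) ^ (-α) :=
    Real.rpow_le_rpow_of_nonpos (mul_pos hc (by linarith))
      (min_one_mul_one_sub_le_one_sub_rpow ht0.le ht1.le hp) (by linarith)
  calc (1 - t ^ p) ^ (-α) * t ^ δ ≤ (min 1 p * (1 - t)) ^ (-α) * t ^ δ := by gcongr
    _ = min 1 p ^ (-α) * (t ^ δ * (1 - t) ^ (-α)) := by
      rw [Real.mul_rpow hc.le (by linarith)]; ring

lemma integrableOn_Ioo_one_sub_rpow_rpow_neg_mul_rpow (hp : 0 < p) (hα0 : 0 ≤ α) (hα1 : α < 1)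
    {σ : ℝ} (hσ : 0 < σ) :
    IntegrableOn (fun t : ℝ => (1 - t ^ p) ^ (-α) * t ^ δ) (Ioo σ 1) := by
  have hδ : -1 < δ + |δ| := by linarith [neg_abs_le δ]
  refine (((integrableOn_one_sub_rpow_rpow_neg_mul_rpow hp hα0 hα1 hδ).mono_set
    (Ioo_subset_Ioo_left hσ.le)).const_mul (σ ^ (-|δ|))).mono' (by fun_prop) ?_
  filter_upwards [ae_restrict_mem measurableSet_Ioo] with t ⟨hσt, ht1⟩
  have ht0 := hσ.trans hσt
  rw [Real.norm_of_nonneg (one_sub_rpow_rpow_neg_mul_rpow_nonneg hp.le ht0.le ht1.le),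
    mul_left_comm]
  have : 0 ≤ (1 - t ^ p) ^ (-α) :=
    Real.rpow_nonneg (by linarith [Real.rpow_le_one ht0.le ht1.le hp.le]) _
  gcongr
  exact rpow_le_rpow_neg_mul_rpow_add δ hσ hσt.le (abs_nonneg δ)

end ProfileIntegrand

section Kernel

variable {d : ℕ} {α b : ℝ}

lemma one_div_Gamma_one_sub_pos (hα1 : α < 1) : 0 < 1 / Real.Gamma (1 - α) :=
  one_div_pos.2 (Real.Gamma_pos_of_pos (by linarith))

lemma Qker_nonneg (hb : 0 < b) (hα1 : α < 1) {σ : ℝ} (hσ : 0 ≤ σ) : 0 ≤ Qker d α b σ :=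
  mul_nonneg (one_div_Gamma_one_sub_pos hα1).le
    (setIntegral_nonneg measurableSet_Ioo fun t ht =>
      one_sub_rpow_rpow_neg_mul_rpow_nonneg (by positivity) (hσ.trans ht.1.le) ht.2.le)

lemma Qker_pos (hb : 0 < b) (hα0 : 0 ≤ α) (hα1 : α < 1) {σ : ℝ} (hσ0 : 0 < σ) (hσ1 : σ < 1) :
    0 < Qker d α b σ :=
  mul_pos (one_div_Gamma_one_sub_pos hα1)
    (setIntegral_Ioo_pos hσ1
      (integrableOn_Ioo_one_sub_rpow_rpow_neg_mul_rpow (by positivity) hα0 hα1 hσ0)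
      fun t ht => one_sub_rpow_rpow_neg_mul_rpow_pos (by positivity) (hσ0.trans ht.1) ht.2)

lemma Qker_antitoneOn (hb : 0 < b) (hα0 : 0 ≤ α) (hα1 : α < 1) :
    AntitoneOn (Qker d α b) (Ioi 0) := by
  intro σ₁ hσ₁ σ₂ _ h12
  refine mul_le_mul_of_nonneg_left (setIntegral_mono_set
    (integrableOn_Ioo_one_sub_rpow_rpow_neg_mul_rpow (by positivity) hα0 hα1 hσ₁) ?_
    (Ioo_subset_Ioo_left h12).eventuallyLE) (one_div_Gamma_one_sub_pos hα1).le
  exact ae_restrict_of_forall_mem measurableSet_Ioo fun t ht =>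
    one_sub_rpow_rpow_neg_mul_rpow_nonneg (by positivity) ((mem_Ioi.1 hσ₁).le.trans ht.1.le) ht.2.le

lemma exists_Qker_le_mul_rpow_neg (hb : 0 < b) (hα0 : 0 ≤ α) (hα1 : α < 1) {β : ℝ}
    (hβ0 : 0 ≤ β) (hβd : (d:ℝ) - 2 < β) :
    ∃ C, ∀ σ, 0 < σ → Qker d α b σ ≤ C * σ ^ (-β) := by
  have hp : 0 < 1 / b := by positivity
  have hint := integrableOn_one_sub_rpow_rpow_neg_mul_rpow hp hα0 hα1 (δ := 1 - d + β)
    (by linarith)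
  refine ⟨(1 / Real.Gamma (1 - α)) *
    ∫ t in Ioo 0 1, (1 - t ^ (1 / b)) ^ (-α) * t ^ (1 - (d:ℝ) + β), fun σ hσ => ?_⟩
  have hpointwise : ∀ t ∈ Ioo σ 1, (1 - t ^ (1 / b)) ^ (-α) * t ^ (1 - (d:ℝ))
      ≤ σ ^ (-β) * ((1 - t ^ (1 / b)) ^ (-α) * t ^ (1 - (d:ℝ) + β)) := fun t ht => by
    have : 0 ≤ (1 - t ^ (1 / b)) ^ (-α) :=
      Real.rpow_nonneg (by linarith [Real.rpow_le_one (hσ.trans ht.1).le ht.2.le hp.le]) _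
    rw [mul_left_comm]
    gcongr
    exact rpow_le_rpow_neg_mul_rpow_add _ hσ ht.1.le hβ0
  have hshrink : ∫ t in Ioo σ 1, (1 - t ^ (1 / b)) ^ (-α) * t ^ (1 - (d:ℝ) + β)
      ≤ ∫ t in Ioo 0 1, (1 - t ^ (1 / b)) ^ (-α) * t ^ (1 - (d:ℝ) + β) :=
    setIntegral_mono_set hint (ae_restrict_of_forall_mem measurableSet_Ioo fun t ht =>
      one_sub_rpow_rpow_neg_mul_rpow_nonneg hp.le ht.1.le ht.2.le)
      (Ioo_subset_Ioo_left hσ.le).eventuallyLE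
  calc Qker d α b σ ≤ (1 / Real.Gamma (1 - α)) *
        (σ ^ (-β) * ∫ t in Ioo σ 1, (1 - t ^ (1 / b)) ^ (-α) * t ^ (1 - (d:ℝ) + β)) := by
        rw [← integral_const_mul]
        exact mul_le_mul_of_nonneg_left (setIntegral_mono_on
          (integrableOn_Ioo_one_sub_rpow_rpow_neg_mul_rpow hp hα0 hα1 hσ)
          ((hint.mono_set (Ioo_subset_Ioo_left hσ.le)).const_mul _) measurableSet_Ioo
          hpointwise) (one_div_Gamma_one_sub_pos hα1).le
    _ ≤ _ := by
      rw [mul_left_comm, mul_comm _ (σ ^ (-β))]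
      have := Real.rpow_nonneg hσ.le (-β)
      gcongr

lemma integrableOn_Qker_mul_rpow (hb : 0 < b) (hα0 : 0 ≤ α) (hα1 : α < 1) {γ : ℝ}
    (h2 : 2 < γ) (hd : (d:ℝ) < γ) :
    IntegrableOn (fun σ => Qker d α b σ * σ ^ (γ - 3)) (Ioo 0 1) := by
  obtain ⟨β, hβ, hβγ⟩ := exists_between (max_lt (by linarith : 0 < γ - 2) (by linarith :
    (d:ℝ) - 2 < γ - 2))
  obtain ⟨C, hC⟩ :=
    exists_Qker_le_mul_rpow_neg hb hα0 hα1 (max_lt_iff.1 hβ).1.le (max_lt_iff.1 hβ).2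
  have hmeas : AEStronglyMeasurable (Qker d α b) (volume.restrict (Ioo 0 1)) :=
    (aemeasurable_restrict_of_antitoneOn measurableSet_Ioo
      ((Qker_antitoneOn hb hα0 hα1).mono Ioo_subset_Ioi_self)).aestronglyMeasurable
  refine (((intervalIntegral.integrableOn_Ioo_rpow_iff zero_lt_one).2
    (by linarith : -1 < γ - 3 - β)).const_mul C).mono' (hmeas.mul (by fun_prop)) ?_
  filter_upwards [ae_restrict_mem measurableSet_Ioo] with σ ⟨hσ0, _⟩
  rw [Real.norm_of_nonneg (mul_nonneg (Qker_nonneg hb hα1 hσ0.le) (by positivity)),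
    show γ - 3 - β = -β + (γ - 3) by ring, Real.rpow_add hσ0, ← mul_assoc]
  gcongr
  exact hC σ hσ0

lemma Qmoment_pos (hb : 0 < b) (hα0 : 0 ≤ α) (hα1 : α < 1) {γ : ℝ} (h2 : 2 < γ)
    (hd : (d:ℝ) < γ) : 0 < Qmoment d α b γ :=
  setIntegral_Ioo_pos one_pos (integrableOn_Qker_mul_rpow hb hα0 hα1 h2 hd) fun _ hσ =>
    mul_pos (Qker_pos hb hα0 hα1 hσ.1 hσ.2) (Real.rpow_pos_of_pos hσ.1 _)

end Kernel

section ChangeOfVariables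

variable {z : ℝ}

lemma image_const_div_Ioo_zero_one (hz : 0 < z) : (z / ·) '' Ioo (0:ℝ) 1 = Ioi z := by
  ext ρ
  constructor
  · rintro ⟨σ, ⟨hσ0, hσ1⟩, rfl⟩
    exact (lt_div_iff₀ hσ0).2 (by nlinarith)
  · intro (hρ : z < ρ)
    have hρ0 : 0 < ρ := hz.trans hρ
    exact ⟨z / ρ, ⟨by positivity, (div_lt_one hρ0).2 hρ⟩, div_div_cancel₀ hz.ne'⟩

lemma injective_const_div (hz : z ≠ 0) : Function.Injective (z / · : ℝ → ℝ) := fun a c h => by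
  simpa [div_eq_mul_inv, hz] using h

lemma hasDerivAt_const_div {σ : ℝ} (hσ : σ ≠ 0) : HasDerivAt (z / ·) (-(z / σ ^ 2)) σ := by
  simpa [div_eq_mul_inv, neg_div] using (hasDerivAt_inv hσ).const_mul z

lemma setIntegral_Ioi_eq_setIntegral_Ioo (hz : 0 < z) (g : ℝ → ℝ) :
    ∫ ρ in Ioi z, g ρ = ∫ σ in Ioo 0 1, |-(z / σ ^ 2)| * g (z / σ) := by
  rw [← image_const_div_Ioo_zero_one hz, integral_image_eq_integral_abs_deriv_smul
    measurableSet_Ioo (fun σ hσ => (hasDerivAt_const_div hσ.1.ne').hasDerivWithinAt)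
    (injective_const_div hz.ne').injOn]
  rfl

lemma integrableOn_Ioi_iff_integrableOn_Ioo (hz : 0 < z) (g : ℝ → ℝ) :
    IntegrableOn g (Ioi z) ↔ IntegrableOn (fun σ => |-(z / σ ^ 2)| * g (z / σ)) (Ioo 0 1) := by
  rw [← image_const_div_Ioo_zero_one hz, integrableOn_image_iff_integrableOn_abs_deriv_smul
    measurableSet_Ioo (fun σ hσ => (hasDerivAt_const_div hσ.1.ne').hasDerivWithinAt)
    (injective_const_div hz.ne').injOn]
  rfl

end ChangeOfVariables

section Moments

variable {d : ℕ} {α b z : ℝ}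

lemma abs_deriv_mul_Kker_mul_rpow (hz : 0 < z) {σ : ℝ} (hσ : 0 < σ) (γ : ℝ) :
    |-(z / σ ^ 2)| * (Kker d α b z (z / σ) * (z / σ) ^ (-γ))
      = z ^ (2 - γ) * (Qker d α b σ * σ ^ (γ - 3)) := by
  rw [Kker, div_div_cancel₀ hz.ne', abs_neg, abs_of_pos (by positivity),
    Real.div_rpow hz.le hσ.le, Real.rpow_sub hz, Real.rpow_sub hσ, Real.rpow_neg hz.le,
    Real.rpow_neg hσ.le]
  norm_num
  field_simp

lemma setIntegral_Kker_mul_rpow_neg (hz : 0 < z) (γ : ℝ) :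
    ∫ ρ in Ioi z, Kker d α b z ρ * ρ ^ (-γ) = z ^ (2 - γ) * Qmoment d α b γ := by
  rw [setIntegral_Ioi_eq_setIntegral_Ioo hz, Qmoment, ← integral_const_mul]
  exact setIntegral_congr_fun measurableSet_Ioo fun σ hσ => abs_deriv_mul_Kker_mul_rpow hz hσ.1 γ

lemma integrableOn_Kker_mul_rpow_neg (hz : 0 < z) {γ : ℝ}
    (h : IntegrableOn (fun σ => Qker d α b σ * σ ^ (γ - 3)) (Ioo 0 1)) :
    IntegrableOn (fun ρ => Kker d α b z ρ * ρ ^ (-γ)) (Ioi z) := by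
  rw [integrableOn_Ioi_iff_integrableOn_Ioo hz]
  exact IntegrableOn.congr_fun (h.const_mul (z ^ (2 - γ)))
    (fun σ hσ => (abs_deriv_mul_Kker_mul_rpow hz hσ.1 γ).symm) measurableSet_Ioo

lemma max_zero_le_setIntegral_Kker_mul_tail {γ δ c : ℝ} (hb : 0 < b)
    (hα0 : 0 ≤ α) (hα1 : α < 1) (hz : 0 < z) (h2 : 2 < γ) (hd : (d:ℝ) < γ) (hδ : 0 ≤ δ)
    (hc : 0 ≤ c) (A : ℝ) :
    max 0 (c * (z ^ (2 - γ) * Qmoment d α b γ - A * (z ^ (2 - (γ + δ)) * Qmoment d α b (γ + δ))))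
      ≤ ∫ ρ in Ioi z, Kker d α b z ρ * (c * ρ ^ (-γ) * max 0 (1 - A * ρ ^ (-δ))) := by
  have hf0 : ∀ ρ ∈ Ioi z, 0 ≤ Kker d α b z ρ * ρ ^ (-γ) := fun ρ (hρ : z < ρ) => by
    have hρ0 := hz.trans hρ
    have := Qker_nonneg (d := d) hb hα1 (by positivity : 0 ≤ z / ρ)
    rw [Kker]
    positivity
  have hsplit : ∀ ρ ∈ Ioi z, Kker d α b z ρ * ρ ^ (-(γ + δ))
      = Kker d α b z ρ * ρ ^ (-γ) * ρ ^ (-δ) := fun ρ (hρ : z < ρ) => by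
    rw [neg_add, Real.rpow_add (hz.trans hρ), mul_assoc]
  have hfi := integrableOn_Kker_mul_rpow_neg hz
    (integrableOn_Qker_mul_rpow hb hα0 hα1 h2 hd)
  have hfwi := (integrableOn_Kker_mul_rpow_neg hz
    (integrableOn_Qker_mul_rpow hb hα0 hα1 (by linarith : 2 < γ + δ)
      (by linarith))).congr_fun hsplit measurableSet_Ioi
  have hlow := setIntegral_sub_mul_le_setIntegral_mul_max_zero measurableSet_Ioi hfi hfwi
    (by fun_prop) hf0 A
  rw [integral_sub hfi (hfwi.const_mul A), integral_const_mul,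
    ← setIntegral_congr_fun measurableSet_Ioi hsplit, setIntegral_Kker_mul_rpow_neg hz,
    setIntegral_Kker_mul_rpow_neg hz] at hlow
  have hfactor : ∀ ρ, Kker d α b z ρ * (c * ρ ^ (-γ) * max 0 (1 - A * ρ ^ (-δ)))
      = c * (Kker d α b z ρ * ρ ^ (-γ) * max 0 (1 - A * ρ ^ (-δ))) := fun ρ => by ring
  simp only [hfactor, integral_const_mul]
  refine max_le (mul_nonneg hc (setIntegral_nonneg measurableSet_Ioi fun ρ hρ =>
    mul_nonneg (hf0 ρ hρ) (le_max_left _ _))) (mul_le_mul_of_nonneg_left hlow hc)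

end Moments

theorem tail_subsolution_general (d : ℕ) (α m b : ℝ)
    (hα : α ∈ Set.Ioo (0:ℝ) 1)
    (hmc : max 0 (((d:ℝ) - 2) / d) < m) (hm1 : m < 1)
    (hb : b = α / (2 + (d:ℝ) * (m - 1)))
    (γstar : ℝ) (hγpos : 0 < γstar)
    (hγeq : Qmoment d α b (2 / (1 - m) + γstar) = m * Qmoment d α b (2 / (1 - m)))
    (cstar : ℝ) (hc : cstar = Qmoment d α b (2 / (1 - m)) ^ (-(1 / (1 - m))))
    (A : ℝ) :
    ∀ z : ℝ, 0 < z →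
      (cstar * z ^ (-(2 / (1 - m))) * max 0 (1 - A * z ^ (-γstar))) ^ m
        ≤ ∫ ρ in Set.Ioi z,
            Kker d α b z ρ * (cstar * ρ ^ (-(2 / (1 - m))) * max 0 (1 - A * ρ ^ (-γstar))) := by
  intro z hz
  obtain ⟨hα0, hα1⟩ := hα
  have hm0 : 0 < m := (le_max_left _ _).trans_lt hmc
  have hdm := mul_one_sub_lt_two_of_max_lt hmc
  have hb0 : 0 < b := hb ▸ div_pos hα0 (by linarith)
  have h2 : 2 < 2 / (1 - m) := by rw [lt_div_iff₀ (by linarith)]; linarith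
  have hd : (d:ℝ) < 2 / (1 - m) := by rw [lt_div_iff₀ (by linarith)]; linarith
  have hQ := Qmoment_pos hb0 hα0.le hα1 h2 hd
  have hc0 : 0 ≤ cstar := hc ▸ (Real.rpow_pos_of_pos hQ _).le
  calc (cstar * z ^ (-(2 / (1 - m))) * max 0 (1 - A * z ^ (-γstar))) ^ m
      = (cstar * z ^ (-(2 / (1 - m)))) ^ m * max 0 (1 - A * z ^ (-γstar)) ^ m :=
        Real.mul_rpow (by positivity) (le_max_left _ _)
    _ ≤ (cstar * z ^ (-(2 / (1 - m)))) ^ m * max 0 (1 - m * (A * z ^ (-γstar))) := by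
        gcongr
        exact max_zero_one_sub_rpow_le hm0 hm1.le
    _ = max 0 (cstar * (z ^ (2 - 2 / (1 - m)) * Qmoment d α b (2 / (1 - m))
          - A * (z ^ (2 - (2 / (1 - m) + γstar)) * Qmoment d α b (2 / (1 - m) + γstar)))) := by
        rw [hc, verySingular_rpow_eq hQ hz hm1, ← hc, mul_max_of_nonneg _ _ (by positivity),
          hγeq, sub_add_eq_sub_sub, Real.rpow_sub hz _ γstar, Real.rpow_neg hz.le]
        ring_nf
    _ ≤ _ := max_zero_le_setIntegral_Kker_mul_tail hb0 hα0.le hα1 hz h2 hd hγpos.le hc0 A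

/-- in the mildly-fast-diffusion range `m_c < m < 1`, with `γ₀ = 2/(1-m)`,
`c* = 𝖰(γ₀)^{-1/(1-m)}` and `γ* > 0` satisfying `𝖰(γ₀+γ*) = m·𝖰(γ₀)`, the function
`Ū(z) = c*·z^{-γ₀}·max(0, 1 - A·z^{-γ*})` is a subsolution of the profile equation. -/
theorem tail_subsolution (d : ℕ) (hd : 1 ≤ d) (α m b : ℝ)
    (hα : α ∈ Set.Ioo (0:ℝ) 1)
    (hmc : max 0 (((d:ℝ) - 2) / d) < m) (hm1 : m < 1)
    (hb : b = α / (2 + (d:ℝ) * (m - 1)))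
    (γstar : ℝ) (hγpos : 0 < γstar)
    (hγeq : Qmoment d α b (2 / (1 - m) + γstar) = m * Qmoment d α b (2 / (1 - m)))
    (cstar : ℝ) (hc : cstar = Qmoment d α b (2 / (1 - m)) ^ (-(1 / (1 - m))))
    (A : ℝ) :
    ∀ z : ℝ, 0 < z →
      (cstar * z ^ (-(2 / (1 - m))) * max 0 (1 - A * z ^ (-γstar))) ^ m
        ≤ ∫ ρ in Set.Ioi z,
            Kker d α b z ρ * (cstar * ρ ^ (-(2 / (1 - m))) * max 0 (1 - A * ρ ^ (-γstar))) :=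
  tail_subsolution_general d α m b hα hmc hm1 hb γstar hγpos hγeq cstar hc A
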